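/- arXiv:2411.12253 — 4 statements merged into one kernel-verified Lean document; each statement's English description precedes it below -/
import Mathlib

section
/- Let p > 1, C > 0, d = (p−1)/(2(p+1)) · C^{−2(p+1)/(p−1)}, and 0 ≤ J₀ < d. Suppose ε₃ > 1 satisfies J₀ = (ε₁² ε₃² / C²)(1/2 − ε₃^{p−1}/(p+1)), where ε₁ = C^{−2/(p−1)}. Then ε₃ ≥ ((p+1)/2 − C^{2(p+1)/(p−1)} J₀ (p+1))^{1/(p−1)} > 1. -/
/-! Multiplying the identity for `J₀` by `A = C^{2(p+1)/(p-1)}` turns it into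
`A J₀ = ε₃² (1/2 - a/(p+1))` with `a = ε₃^{p-1}`. As `A J₀ ≥ 0` the bracket is nonnegative, and
then `ε₃² ≥ 1` gives `(p+1)/2 - (p+1) A J₀ ≤ a`; taking `(p-1)`-th roots yields the lower bound.
The condition `J₀ < d` is exactly `(p+1)/2 - (p+1) A J₀ > 1`. -/

open Real

lemma rpow_neg_two_div_sq_div_sq {C : ℝ} (hC : 0 < C) {p : ℝ} (hp : p ≠ 1) :
    (C ^ (-2 / (p - 1))) ^ 2 / C ^ 2 = (C ^ (2 * (p + 1) / (p - 1)))⁻¹ := by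
  have hp' : p - 1 ≠ 0 := sub_ne_zero.mpr hp
  rw [← rpow_natCast _ 2, ← rpow_mul hC.le, ← rpow_natCast C 2, ← rpow_sub hC, ← rpow_neg hC.le]
  congr 1
  field_simp
  ring

lemma rpow_mul_rpow_neg_div {C : ℝ} (hC : 0 < C) (c x y : ℝ) :
    C ^ (x / y) * (c * C ^ (-x / y)) = c := by
  rw [neg_div, rpow_neg hC.le, mul_left_comm, mul_inv_cancel₀ (rpow_pos_of_pos hC _).ne', mul_one]

lemma half_sub_mul_le_of_eq {s x a K : ℝ} (hs : 0 < s) (hx : 1 ≤ x) (hK : 0 ≤ K)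
    (h : K = x ^ 2 * (1 / 2 - a / s)) : s / 2 - K * s ≤ a := by
  have hKs : K * s = x ^ 2 * (s / 2 - a) := by rw [h]; field_simp
  have hx2 : 1 ≤ x ^ 2 := one_le_pow₀ hx
  have ha : 0 ≤ s / 2 - a := by
    by_contra! ha
    nlinarith [mul_pos hs (mul_pos (by linarith : (0:ℝ) < x ^ 2) (neg_pos.mpr ha))]
  nlinarith [mul_nonneg (sub_nonneg.mpr hx2) ha]

lemma one_lt_half_sub_mul {p K : ℝ} (hp : 0 < p + 1) (hK : K < (p - 1) / (2 * (p + 1))) :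
    1 < (p + 1) / 2 - K * (p + 1) := by
  rw [lt_div_iff₀ (by positivity)] at hK
  linarith

theorem stmt_3 (p C J₀ ε₃ : ℝ) (hp : 1 < p) (hC : 0 < C)
    (d : ℝ) (hd : d = (p - 1) / (2 * (p + 1)) * C ^ (-(2 * (p + 1)) / (p - 1)))
    (hJ₀ : 0 ≤ J₀) (hJ₀d : J₀ < d)
    (ε₁ : ℝ) (hε₁ : ε₁ = C ^ (-2 / (p - 1)))
    (hε₃ : 1 < ε₃)
    (heq : J₀ = ε₁ ^ 2 * ε₃ ^ 2 / C ^ 2 * (1 / 2 - ε₃ ^ (p - 1) / (p + 1))) :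
    ε₃ ≥ ((p + 1) / 2 - C ^ (2 * (p + 1) / (p - 1)) * J₀ * (p + 1)) ^ (1 / (p - 1)) ∧
      ((p + 1) / 2 - C ^ (2 * (p + 1) / (p - 1)) * J₀ * (p + 1)) ^ (1 / (p - 1)) > 1 := by
  set A := C ^ (2 * (p + 1) / (p - 1))
  have hA : 0 < A := rpow_pos_of_pos hC _
  have hp1 : 0 < p - 1 := by linarith
  have hAJ : A * J₀ = ε₃ ^ 2 * (1 / 2 - ε₃ ^ (p - 1) / (p + 1)) := by
    rw [heq, mul_div_right_comm, hε₁, rpow_neg_two_div_sq_div_sq hC hp.ne', ← mul_assoc,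
      ← mul_assoc, mul_inv_cancel₀ hA.ne', one_mul]
  have hB1 : 1 < (p + 1) / 2 - A * J₀ * (p + 1) :=
    one_lt_half_sub_mul (by linarith) <| by
      simpa [hd, A, rpow_mul_rpow_neg_div hC] using mul_lt_mul_of_pos_left hJ₀d hA
  have hBa : (p + 1) / 2 - A * J₀ * (p + 1) ≤ ε₃ ^ (p - 1) :=
    half_sub_mul_le_of_eq (by linarith) hε₃.le (by positivity) hAJ
  refine ⟨?_, one_lt_rpow hB1 (by positivity)⟩
  rw [one_div, ge_iff_le, rpow_inv_le_iff_of_pos (by linarith) (by linarith) hp1]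
  exact hBa
end

section
/- Let T > 0, p > 1, K > 0, and let M : [0,T) → ℝ be a positive differentiable function satisfying M'(t) ≤ K · M(t)^{(p+1)/2} for all t ∈ [0,T) and lim_{t→T⁻} M(t) = ∞. Then for every t ∈ [0,T), M(t) ≥ (K(p−1)/2)^{−2/(p−1)} (T − t)^{−2/(p−1)}. -/
theorem stmt_9 (T p K : ℝ) (hT : 0 < T) (hp : 1 < p) (hK : 0 < K)
    (M M' : ℝ → ℝ)
    (hderiv : ∀ t ∈ Set.Ico 0 T, HasDerivAt M (M' t) t)
    (hpos : ∀ t ∈ Set.Ico 0 T, 0 < M t)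
    (hineq : ∀ t ∈ Set.Ico 0 T, M' t ≤ K * M t ^ ((p + 1) / 2))
    (hblow : Filter.Tendsto M (nhdsWithin T (Set.Iio T)) Filter.atTop) :
    ∀ t ∈ Set.Ico 0 T,
      M t ≥ (K * (p - 1) / 2) ^ (-2 / (p - 1)) * (T - t) ^ (-2 / (p - 1)) := by
  intro t ht
  set α : ℝ := (p - 1) / 2 with hα_def
  have hα : 0 < α := by simp only [hα_def]; linarith
  have hc : 0 < K * α := mul_pos hK hα
  set H : ℝ → ℝ := fun s => M s ^ (-α) + K * α * s with hH_def
  have hHderiv : ∀ s ∈ Set.Ico 0 T,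
      HasDerivAt H (M' s * (-α) * M s ^ (-α - 1) + K * α) s := by
    intro s hs
    have h1 := (hderiv s hs).rpow_const (p := -α) (Or.inl (hpos s hs).ne')
    have h2 : HasDerivAt (fun x : ℝ => K * α * x) (K * α) s := by
      simpa using (hasDerivAt_id s).const_mul (K * α)
    exact h1.add h2
  have hderiv_nonneg : ∀ s ∈ Set.Ioo (0:ℝ) T,
      0 ≤ M' s * (-α) * M s ^ (-α - 1) + K * α := by
    intro s hs
    have hs' : s ∈ Set.Ico 0 T := ⟨hs.1.le, hs.2⟩
    have hM := hpos s hs'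
    have hpow : (0:ℝ) < M s ^ (-α - 1) := Real.rpow_pos_of_pos hM _
    have h1 : M' s * M s ^ (-α - 1) ≤ K := by
      calc M' s * M s ^ (-α - 1)
          ≤ K * M s ^ ((p + 1) / 2) * M s ^ (-α - 1) :=
            mul_le_mul_of_nonneg_right (hineq s hs') hpow.le
        _ = K := by
            rw [mul_assoc, ← Real.rpow_add hM]
            have he : (p + 1) / 2 + (-α - 1) = 0 := by
              simp only [hα_def]; ring
            rw [he, Real.rpow_zero, mul_one]
    nlinarith [mul_nonneg hα.le (sub_nonneg.2 h1)]
  have hmono : MonotoneOn H (Set.Ico 0 T) := by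
    apply monotoneOn_of_deriv_nonneg (convex_Ico 0 T)
    · intro s hs
      exact (hHderiv s hs).continuousAt.continuousWithinAt
    · rw [interior_Ico]
      intro s hs
      exact (hHderiv s ⟨hs.1.le, hs.2⟩).differentiableAt.differentiableWithinAt
    · rw [interior_Ico]
      intro s hs
      rw [(hHderiv s ⟨hs.1.le, hs.2⟩).deriv]
      exact hderiv_nonneg s hs
  have hGlim : Filter.Tendsto (fun s => M s ^ (-α)) (nhdsWithin T (Set.Iio T)) (nhds 0) :=
    (tendsto_rpow_neg_atTop hα).comp hblow
  have hHlim : Filter.Tendsto H (nhdsWithin T (Set.Iio T)) (nhds (K * α * T)) := by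
    have h2 : Filter.Tendsto (fun s : ℝ => K * α * s) (nhdsWithin T (Set.Iio T))
        (nhds (K * α * T)) :=
      ((continuous_const.mul continuous_id).tendsto T).mono_left nhdsWithin_le_nhds
    simpa using hGlim.add h2
  have hkey : H t ≤ K * α * T := by
    have hne : (nhdsWithin T (Set.Iio T)).NeBot := nhdsLT_neBot T
    refine ge_of_tendsto hHlim ?_
    have hmem : Set.Ioo t T ∈ nhdsWithin T (Set.Iio T) :=
      Ioo_mem_nhdsLT_of_mem ⟨ht.2, le_refl T⟩
    filter_upwards [hmem] with s hs
    exact hmono ht ⟨le_trans ht.1 hs.1.le, hs.2⟩ hs.1.le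
  have hMt := hpos t ht
  have hTt : 0 < T - t := sub_pos.2 ht.2
  have hle : M t ^ (-α) ≤ K * α * (T - t) := by
    simp only [hH_def] at hkey
    nlinarith [hkey]
  have h2 : (K * α * (T - t)) ^ (-(1/α)) ≤ (M t ^ (-α)) ^ (-(1/α)) :=
    Real.rpow_le_rpow_of_nonpos (Real.rpow_pos_of_pos hMt _) hle
      (neg_nonpos_of_nonneg (by positivity))
  have h3 : (M t ^ (-α)) ^ (-(1/α)) = M t := by
    rw [← Real.rpow_mul hMt.le]
    rw [show (-α) * (-(1/α)) = 1 from by field_simp, Real.rpow_one]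
  have hp1 : p - 1 ≠ 0 := by linarith
  have hexp : -2 / (p - 1) = -(1/α) := by
    simp only [hα_def]
    field_simp
  have hKα : K * (p - 1) / 2 = K * α := by simp only [hα_def]; ring
  rw [ge_iff_le, hKα, hexp, ← Real.mul_rpow hc.le hTt.le]
  exact h2.trans h3.le
end

section
/- Let M, F : [0,T) → ℝ be differentiable with M > 0, F > 0, and suppose there is a constant C₁ > 2 such that M'(t) ≥ C₁ F(t) and M(t) F'(t) ≥ (C₁/2) M'(t) F(t) for all t ∈ [0,T). Then t ↦ F(t)/M(t)^{C₁/2} is nondecreasing on [0,T); consequently M'(t) ≥ C₁ F(0) M(0)^{−C₁/2} M(t)^{C₁/2} for all t ∈ [0,T). -/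
theorem stmt_10 (T C₁ : ℝ) (hT : 0 < T) (hC₁ : 2 < C₁)
    (M M' F F' : ℝ → ℝ)
    (hMderiv : ∀ t ∈ Set.Ico 0 T, HasDerivAt M (M' t) t)
    (hFderiv : ∀ t ∈ Set.Ico 0 T, HasDerivAt F (F' t) t)
    (hMpos : ∀ t ∈ Set.Ico 0 T, 0 < M t)
    (hFpos : ∀ t ∈ Set.Ico 0 T, 0 < F t)
    (h1 : ∀ t ∈ Set.Ico 0 T, M' t ≥ C₁ * F t)
    (h2 : ∀ t ∈ Set.Ico 0 T, M t * F' t ≥ C₁ / 2 * (M' t * F t)) :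
    MonotoneOn (fun t => F t / M t ^ (C₁ / 2)) (Set.Ico 0 T) ∧
      ∀ t ∈ Set.Ico 0 T, M' t ≥ C₁ * (F 0 / M 0 ^ (C₁ / 2)) * M t ^ (C₁ / 2) := by
  set c : ℝ := C₁ / 2 with hc
  have hcpos : 0 < c := by positivity
  -- derivative of g at each point of Ico
  have hg : ∀ t ∈ Set.Ico 0 T, HasDerivAt (fun t => F t / M t ^ c)
      ((F' t * M t ^ c - F t * (c * M t ^ (c - 1) * M' t)) / (M t ^ c) ^ 2) t := by
    intro t ht
    have hM := hMpos t ht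
    have hpow : HasDerivAt (fun t => M t ^ c) (c * M t ^ (c - 1) * M' t) t := by
      have := (hMderiv t ht).rpow_const (p := c) (Or.inl hM.ne')
      convert this using 1; ring
    exact (hFderiv t ht).div hpow (by positivity)
  have hcont : ContinuousOn (fun t => F t / M t ^ c) (Set.Ico 0 T) := by
    intro t ht
    exact ((hg t ht).continuousAt).continuousWithinAt
  have hmono : MonotoneOn (fun t => F t / M t ^ c) (Set.Ico 0 T) := by
    apply monotoneOn_of_deriv_nonneg (convex_Ico 0 T) hcont
    · intro x hx
      rw [interior_Ico] at hx
      exact (hg x (Set.Ioo_subset_Ico_self hx)).differentiableAt.differentiableWithinAt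
    · intro x hx
      rw [interior_Ico] at hx
      have hx' : x ∈ Set.Ico 0 T := Set.Ioo_subset_Ico_self hx
      rw [(hg x hx').deriv]
      have hM := hMpos x hx'
      have hF := hFpos x hx'
      have h2' := h2 x hx'
      have hp1 : (0:ℝ) < M x ^ (c - 1) := Real.rpow_pos_of_pos hM _
      have hp2 : M x ^ (c - 1) * M x = M x ^ c := by
        rw [← Real.rpow_add_one hM.ne' (c - 1)]; norm_num
      apply div_nonneg _ (by positivity)
      have key : M x ^ (c - 1) * (c * (M' x * F x)) ≤ M x ^ (c - 1) * (M x * F' x) :=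
        mul_le_mul_of_nonneg_left h2' hp1.le
      have e1 : M x ^ (c - 1) * (M x * F' x) = F' x * M x ^ c := by rw [← hp2]; ring
      have e2 : M x ^ (c - 1) * (c * (M' x * F x)) = F x * (c * M x ^ (c - 1) * M' x) := by ring
      linarith
  refine ⟨hmono, ?_⟩
  intro t ht
  have h0 : (0:ℝ) ∈ Set.Ico 0 T := ⟨le_refl 0, hT⟩
  have hle := hmono h0 ht ht.1
  simp only at hle
  have hMt := hMpos t ht
  have hpt : (0:ℝ) < M t ^ c := Real.rpow_pos_of_pos hMt _
  have hFt : F 0 / M 0 ^ c * M t ^ c ≤ F t := by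
    rw [← le_div_iff₀ hpt]; exact hle
  have h1' := h1 t ht
  nlinarith
end

section
/- Let p > 1, C* > 0, d = (p−1)/(2(p+1)) · C*^{−2(p+1)/(p−1)}, and 0 < J₀ < d. Suppose a, b ≥ 0 satisfy b ≤ C* √a (i.e. the Sobolev bound ‖φ‖_{p+1} ≤ C*‖Xφ‖₂) and a/2 − b^{p+1}/((p+1) · 1) ≤ J₀ with a/2 − b^{p+1}/(p+1) ≥ ((p−1)/(2(p+1))) a (i.e. I(φ) ≥ 0). Then b^{p+1} ≤ (J₀/d)^{(p−1)/2} · a, where b^{p+1} represents ‖φ‖_{p+1}^{p+1} and a represents ‖Xφ‖₂². -/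
theorem stmt_13 (p Cs J₀ a b : ℝ) (hp : 1 < p) (hCs : 0 < Cs)
    (d : ℝ) (hd : d = (p - 1) / (2 * (p + 1)) * Cs ^ (-(2 * (p + 1)) / (p - 1)))
    (hJ₀ : 0 < J₀) (hJ₀d : J₀ < d)
    (ha : 0 ≤ a) (hb : 0 ≤ b)
    (hSob : b ≤ Cs * Real.sqrt a)
    (hJ : a / 2 - b ^ (p + 1) / (p + 1) ≤ J₀)
    (hI : a / 2 - b ^ (p + 1) / (p + 1) ≥ (p - 1) / (2 * (p + 1)) * a) :
    b ^ (p + 1) ≤ (J₀ / d) ^ ((p - 1) / 2) * a := by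
  have hp1 : (0:ℝ) < p - 1 := by linarith
  have hp2 : (0:ℝ) < p + 1 := by linarith
  have hE : (0:ℝ) < Cs ^ (-(2 * (p + 1)) / (p - 1)) := Real.rpow_pos_of_pos hCs _
  have hdpos : 0 < d := by rw [hd]; positivity
  have hq : 0 < J₀ / d := div_pos hJ₀ hdpos
  have haux : (p - 1) / (2 * (p + 1)) * a ≤ J₀ := le_trans hI hJ
  have key : J₀ / d * Cs ^ (-(2 * (p + 1)) / (p - 1)) = J₀ * (2 * (p + 1)) / (p - 1) := by
    rw [hd]; field_simp
  have ha2 : a ≤ J₀ / d * Cs ^ (-(2 * (p + 1)) / (p - 1)) := by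
    rw [key]
    rw [div_mul_eq_mul_div, div_le_iff₀ (by positivity)] at haux
    rw [le_div_iff₀ hp1]
    nlinarith
  rcases eq_or_lt_of_le ha with h0 | hapos
  · have hb0 : b = 0 := le_antisymm (by simpa [← h0, Real.sqrt_zero] using hSob) hb
    rw [hb0, Real.zero_rpow hp2.ne']
    positivity
  · have h1 : b ^ (p + 1) ≤ (Cs * Real.sqrt a) ^ (p + 1) :=
      Real.rpow_le_rpow hb hSob hp2.le
    have h2 : (Cs * Real.sqrt a) ^ (p + 1)
        = Cs ^ (p + 1) * (a ^ ((p - 1) / 2) * a) := by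
      rw [Real.mul_rpow hCs.le (Real.sqrt_nonneg a)]
      congr 1
      rw [Real.sqrt_eq_rpow, ← Real.rpow_mul ha,
        show (1 / 2) * (p + 1) = (p - 1) / 2 + 1 by ring,
        Real.rpow_add hapos, Real.rpow_one]
    have h3 : a ^ ((p - 1) / 2)
        ≤ (J₀ / d) ^ ((p - 1) / 2) * Cs ^ (-(p + 1)) := by
      have := Real.rpow_le_rpow ha ha2 (by positivity : (0:ℝ) ≤ (p - 1) / 2)
      calc a ^ ((p - 1) / 2)
          ≤ (J₀ / d * Cs ^ (-(2 * (p + 1)) / (p - 1))) ^ ((p - 1) / 2) := this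
        _ = (J₀ / d) ^ ((p - 1) / 2) * Cs ^ (-(p + 1)) := by
            rw [Real.mul_rpow hq.le hE.le, ← Real.rpow_mul hCs.le]
            congr 2
            field_simp
    have hcs1 : Cs ^ (p + 1) * Cs ^ (-(p + 1)) = 1 := by
      rw [← Real.rpow_add hCs, show p + 1 + -(p + 1) = 0 by ring, Real.rpow_zero]
    calc b ^ (p + 1) ≤ Cs ^ (p + 1) * (a ^ ((p - 1) / 2) * a) := h2 ▸ h1
      _ ≤ Cs ^ (p + 1) * ((J₀ / d) ^ ((p - 1) / 2) * Cs ^ (-(p + 1)) * a) := by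
          apply mul_le_mul_of_nonneg_left _ (Real.rpow_pos_of_pos hCs _).le
          exact mul_le_mul_of_nonneg_right h3 ha
      _ = (J₀ / d) ^ ((p - 1) / 2) * a := by
          rw [show Cs ^ (p + 1) * ((J₀ / d) ^ ((p - 1) / 2) * Cs ^ (-(p + 1)) * a)
            = Cs ^ (p + 1) * Cs ^ (-(p + 1)) * ((J₀ / d) ^ ((p - 1) / 2) * a) by ring,
            hcs1, one_mul]
end
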